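/- Let R⁺ be Rayleigh distributed and U standard normal, independent, and ρ ∈ (-1,1). Then P(ρR⁺ + √(1-ρ²)·U < 0) = (1 - ρ)/2. -/

import Mathlib

/-!
Conditioning on `R⁺ = r`, the probability is `∫₀^∞ r e^{-r²/2} Φ(c r) dr` with
`c = -ρ / √(1 - ρ²)`. Because `e^{-r²/2} φ(c r) = φ(√(1 + c²) r)`, integrating by parts against
the Rayleigh density gives the explicit primitive
`(c / √(1 + c²)) Φ(√(1 + c²) r) - e^{-r²/2} Φ(c r)`, so the integral is
`1/2 + c / (2 √(1 + c²))`, and this equals `(1 - ρ)/2` since `√(1 + c²) = 1 / √(1 - ρ²)`.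
-/

open MeasureTheory Real Set

/-- The standard normal cumulative distribution function Φ. -/
noncomputable def stdNormalCDF (x : ℝ) : ℝ :=
  ∫ t in Set.Iic x, (Real.sqrt (2 * Real.pi))⁻¹ * Real.exp (-t ^ 2 / 2)

open ProbabilityTheory Filter Topology

lemma gaussianPDFReal_zero_one (t : ℝ) :
    gaussianPDFReal 0 1 t = (√(2 * π))⁻¹ * exp (-t ^ 2 / 2) := by
  simp [gaussianPDFReal]

lemma stdNormalCDF_eq_setIntegral (x : ℝ) :
    stdNormalCDF x = ∫ t in Iic x, gaussianPDFReal 0 1 t := by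
  simp only [stdNormalCDF, gaussianPDFReal_zero_one]

lemma stdNormalCDF_eq_cdf : stdNormalCDF = cdf (gaussianReal 0 1) := by
  ext x
  rw [cdf_eq_real, measureReal_def, gaussianReal_apply_eq_integral _ one_ne_zero,
    ENNReal.toReal_ofReal (setIntegral_nonneg measurableSet_Iic fun t _ ↦
      gaussianPDFReal_nonneg 0 1 t), stdNormalCDF_eq_setIntegral]

lemma continuous_gaussianPDFReal (μ : ℝ) (v : NNReal) : Continuous (gaussianPDFReal μ v) := by
  unfold gaussianPDFReal; fun_prop

lemma stdNormalCDF_zero : stdNormalCDF 0 = 1 / 2 := by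
  have hsymm : ∫ t in Iic 0, gaussianPDFReal 0 1 t = ∫ t in Ioi 0, gaussianPDFReal 0 1 t := by
    simpa [gaussianPDFReal_zero_one] using integral_comp_neg_Iic 0 (gaussianPDFReal 0 1)
  have htotal := intervalIntegral.integral_Iic_add_Ioi (b := 0)
    (integrable_gaussianPDFReal 0 1).integrableOn (integrable_gaussianPDFReal 0 1).integrableOn
  rw [integral_gaussianPDFReal_eq_one 0 one_ne_zero, ← hsymm] at htotal
  rw [stdNormalCDF_eq_setIntegral]
  linarith

lemma hasDerivAt_stdNormalCDF (x : ℝ) : HasDerivAt stdNormalCDF (gaussianPDFReal 0 1 x) x := by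
  have hint := integrable_gaussianPDFReal 0 1
  have hcont := continuous_gaussianPDFReal 0 1
  have h : stdNormalCDF = fun y ↦ stdNormalCDF 0 + ∫ t in 0..y, gaussianPDFReal 0 1 t := by
    ext y
    rw [stdNormalCDF_eq_setIntegral, stdNormalCDF_eq_setIntegral,
      ← intervalIntegral.integral_Iic_sub_Iic hint.integrableOn hint.integrableOn]
    ring
  rw [h]
  exact (intervalIntegral.integral_hasDerivAt_right hint.intervalIntegrable
    (hcont.stronglyMeasurableAtFilter _ _) hcont.continuousAt).const_add _

@[fun_prop]
lemma continuous_stdNormalCDF : Continuous stdNormalCDF :=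
  continuous_iff_continuousAt.2 fun x ↦ (hasDerivAt_stdNormalCDF x).continuousAt

lemma norm_stdNormalCDF_le_one (x : ℝ) : ‖stdNormalCDF x‖ ≤ 1 := by
  rw [stdNormalCDF_eq_cdf, Real.norm_of_nonneg (cdf_nonneg _ x)]
  exact cdf_le_one _ x

lemma tendsto_stdNormalCDF_atTop : Tendsto stdNormalCDF atTop (𝓝 1) :=
  stdNormalCDF_eq_cdf ▸ tendsto_cdf_atTop _

lemma hasDerivAt_stdNormalCDF_const_mul (a r : ℝ) :
    HasDerivAt (fun r ↦ stdNormalCDF (a * r)) (a * gaussianPDFReal 0 1 (a * r)) r :=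
  ((hasDerivAt_stdNormalCDF (a * r)).comp r ((hasDerivAt_id' r).const_mul a)).congr_deriv (by ring)

lemma exp_mul_gaussianPDFReal_zero_one (c r : ℝ) :
    exp (-r ^ 2 / 2) * gaussianPDFReal 0 1 (c * r) = gaussianPDFReal 0 1 (√(1 + c ^ 2) * r) := by
  simp only [gaussianPDFReal_zero_one, mul_pow, sq_sqrt (by positivity : (0 : ℝ) ≤ 1 + c ^ 2)]
  rw [mul_left_comm, ← exp_add]
  ring_nf

noncomputable def rayleighStdNormalCDFPrimitive (c r : ℝ) : ℝ :=
  c / √(1 + c ^ 2) * stdNormalCDF (√(1 + c ^ 2) * r) - exp (-r ^ 2 / 2) * stdNormalCDF (c * r)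

lemma hasDerivAt_rayleighStdNormalCDFPrimitive (c r : ℝ) :
    HasDerivAt (rayleighStdNormalCDFPrimitive c) (r * exp (-r ^ 2 / 2) * stdNormalCDF (c * r)) r := by
  set s := √(1 + c ^ 2)
  have hs : s ≠ 0 := (sqrt_pos.2 (by positivity)).ne'
  have hexp : HasDerivAt (fun r ↦ exp (-r ^ 2 / 2)) (-r * exp (-r ^ 2 / 2)) r := by
    refine ((hasDerivAt_pow 2 r).neg.div_const 2).exp.congr_deriv ?_
    simp only [Pi.neg_apply]
    ring
  refine (((hasDerivAt_stdNormalCDF_const_mul s r).const_mul (c / s)).sub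
    (hexp.mul (hasDerivAt_stdNormalCDF_const_mul c r))).congr_deriv ?_
  rw [← exp_mul_gaussianPDFReal_zero_one]
  field_simp
  ring

lemma integrableOn_rayleigh_mul_stdNormalCDF (c : ℝ) :
    IntegrableOn (fun r ↦ r * exp (-r ^ 2 / 2) * stdNormalCDF (c * r)) (Ioi 0) := by
  have hg : IntegrableOn (fun r : ℝ ↦ r * exp (-r ^ 2 / 2)) (Ioi 0) := by
    refine (integrable_mul_exp_neg_mul_sq (b := 1 / 2) (by norm_num)).integrableOn.congr_fun
      (fun r _ ↦ ?_) measurableSet_Ioi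
    ring_nf
  refine Integrable.mono hg (Continuous.aestronglyMeasurable (by fun_prop)) (ae_of_all _ fun r ↦ ?_)
  rw [norm_mul _ (stdNormalCDF _)]
  exact mul_le_of_le_one_right (norm_nonneg _) (norm_stdNormalCDF_le_one _)

lemma tendsto_rayleighStdNormalCDFPrimitive_atTop (c : ℝ) :
    Tendsto (rayleighStdNormalCDFPrimitive c) atTop (𝓝 (c / √(1 + c ^ 2))) := by
  have hs : 0 < √(1 + c ^ 2) := sqrt_pos.2 (by positivity)
  have hΦ_atTop : Tendsto (fun r ↦ stdNormalCDF (√(1 + c ^ 2) * r)) atTop (𝓝 1) :=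
    tendsto_stdNormalCDF_atTop.comp (tendsto_id.const_mul_atTop hs)
  have hexp : Tendsto (fun r : ℝ ↦ exp (-r ^ 2 / 2)) atTop (𝓝 0) :=
    tendsto_exp_comp_nhds_zero.2
      ((tendsto_neg_atTop_atBot.comp (tendsto_pow_atTop two_ne_zero)).atBot_div_const two_pos)
  have hdamped : Tendsto (fun r ↦ exp (-r ^ 2 / 2) * stdNormalCDF (c * r)) atTop (𝓝 0) :=
    hexp.zero_mul_isBoundedUnder_le (isBoundedUnder_of ⟨1, fun r ↦ norm_stdNormalCDF_le_one _⟩)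
  have h := (hΦ_atTop.const_mul (c / √(1 + c ^ 2))).sub hdamped
  rwa [mul_one, sub_zero] at h

theorem integral_rayleigh_mul_stdNormalCDF (c : ℝ) :
    ∫ r in Ioi 0, r * exp (-r ^ 2 / 2) * stdNormalCDF (c * r) = 1 / 2 + c / (2 * √(1 + c ^ 2)) := by
  rw [integral_Ioi_of_hasDerivAt_of_tendsto'
    (fun r _ ↦ hasDerivAt_rayleighStdNormalCDFPrimitive c r)
    (integrableOn_rayleigh_mul_stdNormalCDF c) (tendsto_rayleighStdNormalCDFPrimitive_atTop c)]
  simp only [rayleighStdNormalCDFPrimitive, mul_zero, stdNormalCDF_zero, ne_eq,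
    OfNat.ofNat_ne_zero, not_false_eq_true, zero_pow, neg_zero, zero_div, exp_zero]
  ring

/-- For independent Rayleigh `R⁺` and standard normal `U` and `ρ ∈ (-1,1)`,
`P(ρR⁺ + √(1-ρ²)·U < 0) = (1-ρ)/2`. Conditioning on `R⁺ = r`, the probability is
`∫_0^∞ r e^{-r²/2} Φ(-ρr/√(1-ρ²)) dr`. -/
theorem stmt13 (ρ : ℝ) (hρ₁ : -1 < ρ) (hρ₂ : ρ < 1) :
    (∫ r in Set.Ioi (0 : ℝ),
        r * Real.exp (-r ^ 2 / 2) *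
          stdNormalCDF (-ρ * r / Real.sqrt (1 - ρ ^ 2))) = (1 - ρ) / 2 := by
  set q := √(1 - ρ ^ 2)
  have hq : 0 < q := sqrt_pos.2 (by nlinarith)
  have hq2 : q ^ 2 = 1 - ρ ^ 2 := sq_sqrt (by nlinarith)
  have hnorm : √(1 + (-ρ / q) ^ 2) = 1 / q := by
    rw [sqrt_eq_iff_eq_sq (by positivity) (by positivity)]
    field_simp
    linarith
  calc _ = ∫ r in Ioi 0, r * exp (-r ^ 2 / 2) * stdNormalCDF (-ρ / q * r) := by
          simp_rw [div_mul_eq_mul_div]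
    _ = (1 - ρ) / 2 := by
          rw [integral_rayleigh_mul_stdNormalCDF, hnorm]
          field_simp
          ring
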